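/- For n = 4 and any q ≥ 2, ex(4, K₃, q) = 4q². The upper bound follows by averaging over the four triples of indices: each q-edge is supported in exactly two of the four 3-element subsets of {1,2,3,4}, hence 2·ex(4, K₃, q) ≤ 4·ex(3, K₃, q) = 8q². -/
import Mathlib


open Finset

/-- The support of a vector: indices of nonzero entries. -/
def qsupport {n : ℕ} (x : Fin n → ℕ) : Finset (Fin n) :=
  Finset.univ.filter (fun i => x i ≠ 0)

/-- `Qset q n` : all q-edges, i.e. vectors in `{0,…,q}^n` with exactly two nonzero entries. -/
def Qset (q n : ℕ) : Finset (Fin n → ℕ) :=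
  ((Finset.univ : Finset (Fin n → Fin (q+1))).image (fun f i => (f i : ℕ))).filter
    (fun x => (qsupport x).card = 2)

/-- The q-edge with support `{i,j}`, value `a` at `i` and `b` at `j`. -/
def qedge {n : ℕ} (i j : Fin n) (a b : ℕ) : Fin n → ℕ :=
  fun k => if k = i then a else if k = j then b else 0

/-- `H` is an `s`-copy of the graph `F`. -/
def IsSCopy {α : Type} [Fintype α] (s : ℕ) (F : SimpleGraph α) {n : ℕ}
    (H : Finset (Fin n → ℕ)) : Prop :=
  ∃ ι : α → Fin n, Function.Injective ι ∧
    (∀ u v : α, F.Adj u v ↔ ∃ x ∈ H, qsupport x = {ι u, ι v}) ∧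
    H.card = Nat.card F.edgeSet ∧
    ∀ x ∈ H, ∀ y ∈ H, x ≠ y → ∀ i, x i ≠ 0 → y i ≠ 0 → s ≤ x i + y i

/-- `H` contains an `s`-copy of `F`. -/
def ContainsSCopy {α : Type} [Fintype α] (s : ℕ) (F : SimpleGraph α) {n : ℕ}
    (H : Finset (Fin n → ℕ)) : Prop :=
  ∃ H' ⊆ H, IsSCopy s F H'

/-- The ordinary Turán number `ex(n,F)`. -/
noncomputable def exNum {α : Type} [Fintype α] (n : ℕ) (F : SimpleGraph α) : ℕ :=
  sSup {m | ∃ G : SimpleGraph (Fin n),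
    (¬ ∃ φ : F →g G, Function.Injective φ) ∧ m = Nat.card G.edgeSet}

/-- The Turán number `ex(n,F,q,s)`. -/
noncomputable def exQ {α : Type} [Fintype α] (n : ℕ) (F : SimpleGraph α) (q s : ℕ) : ℕ :=
  sSup {m | ∃ H ⊆ Qset q n, ¬ ContainsSCopy s F H ∧ m = H.card}

lemma mem_qsupport {n : ℕ} {x : Fin n → ℕ} {i : Fin n} : i ∈ qsupport x ↔ x i ≠ 0 := by
  simp [qsupport]

lemma mem_Qset_iff {q n : ℕ} (x : Fin n → ℕ) :
    x ∈ Qset q n ↔ (∀ i, x i ≤ q) ∧ (qsupport x).card = 2 := by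
  simp only [Qset, mem_filter, mem_image, mem_univ, true_and, and_congr_left_iff]
  intro _
  constructor
  · rintro ⟨f, rfl⟩ i; exact Nat.lt_succ_iff.mp (f i).isLt
  · intro h; exact ⟨fun i => ⟨x i, Nat.lt_succ_iff.mpr (h i)⟩, funext fun i => rfl⟩

lemma qedge_apply_fst {n : ℕ} (i j : Fin n) (a b : ℕ) : qedge i j a b i = a := by
  simp [qedge]

lemma qedge_apply_snd {n : ℕ} {i j : Fin n} (h : i ≠ j) (a b : ℕ) : qedge i j a b j = b := by
  simp [qedge, h.symm]

lemma qsupport_qedge {n : ℕ} {i j : Fin n} (hij : i ≠ j) {a b : ℕ} (ha : a ≠ 0) (hb : b ≠ 0) :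
    qsupport (qedge i j a b) = {i, j} := by
  ext l
  simp only [mem_qsupport, qedge, mem_insert, mem_singleton]
  by_cases h1 : l = i <;> by_cases h2 : l = j <;> simp [h1, h2, ha, hb, hij.symm]

lemma eq_qedge_of_qsupport {n : ℕ} {x : Fin n → ℕ} {i j : Fin n}
    (h : qsupport x = {i, j}) : x = qedge i j (x i) (x j) := by
  funext l
  unfold qedge
  by_cases h1 : l = i
  · simp [h1]
  · by_cases h2 : l = j
    · have hji : ¬ j = i := h2 ▸ h1
      simp [h1, h2, hji]
    · simp only [h1, h2, if_false]
      by_contra hl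
      have : l ∈ qsupport x := mem_qsupport.mpr hl
      rw [h] at this
      simp [h1, h2] at this

lemma key_lemma (q : ℕ) (hq : 0 < q) (A B C : Finset (ℕ × ℕ))
    (hA : ∀ p ∈ A, 0 < p.1 ∧ p.1 ≤ q ∧ 0 < p.2 ∧ p.2 ≤ q)
    (hB : ∀ p ∈ B, 0 < p.1 ∧ p.1 ≤ q ∧ 0 < p.2 ∧ p.2 ≤ q)
    (hC : ∀ p ∈ C, 0 < p.1 ∧ p.1 ≤ q ∧ 0 < p.2 ∧ p.2 ≤ q)
    (htri : ∀ a ∈ A, ∀ b ∈ B, ∀ c ∈ C,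
      ¬(q + 1 ≤ a.1 + b.1 ∧ q + 1 ≤ a.2 + c.1 ∧ q + 1 ≤ b.2 + c.2)) :
    A.card + B.card + C.card ≤ 2 * q ^ 2 := by
  classical
  set M : ℕ → ℕ := fun β => (A.filter (fun p => p.2 = β)).sup Prod.fst with hM
  set M' : ℕ → ℕ := fun γ => (C.filter (fun p => p.1 = γ)).sup Prod.snd with hM'
  -- B is inside the q × q grid
  have hBcard : B.card ≤ q ^ 2 := by
    have : B ⊆ Finset.Ioc 0 q ×ˢ Finset.Ioc 0 q := by
      intro p hp
      rcases hB p hp with ⟨h1, h2, h3, h4⟩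
      exact mem_product.mpr ⟨mem_Ioc.mpr ⟨h1, h2⟩, mem_Ioc.mpr ⟨h3, h4⟩⟩
    calc B.card ≤ _ := card_le_card this
    _ = q ^ 2 := by rw [card_product, Nat.card_Ioc, Nat.sub_zero, pow_two]
  -- bounds on sups
  have hMle : ∀ β, M β ≤ q := fun β =>
    Finset.sup_le (fun p hp => (hA p (mem_filter.mp hp).1).2.1)
  have hM'le : ∀ γ, M' γ ≤ q := fun γ =>
    Finset.sup_le (fun p hp => (hC p (mem_filter.mp hp).1).2.2.2)
  -- fiber cardinality bounds
  have hAfib : ∀ β, (A.filter (fun p => p.2 = β)).card ≤ M β := by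
    intro β
    have hinj : Set.InjOn Prod.fst ((A.filter (fun p => p.2 = β) : Finset (ℕ × ℕ)) : Set (ℕ × ℕ)) := by
      intro p hp p' hp' h
      simp only [coe_filter, Set.mem_setOf_eq] at hp hp'
      exact Prod.ext h (hp.2.trans hp'.2.symm)
    rw [← Finset.card_image_of_injOn hinj]
    have hsub : (A.filter (fun p => p.2 = β)).image Prod.fst ⊆ Finset.Ioc 0 (M β) := by
      intro a ha
      rcases mem_image.mp ha with ⟨p, hp, rfl⟩
      exact mem_Ioc.mpr ⟨(hA p (mem_filter.mp hp).1).1, Finset.le_sup hp⟩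
    calc _ ≤ _ := card_le_card hsub
    _ = M β := by rw [Nat.card_Ioc, Nat.sub_zero]
  have hCfib : ∀ γ, (C.filter (fun p => p.1 = γ)).card ≤ M' γ := by
    intro γ
    have hinj : Set.InjOn Prod.snd ((C.filter (fun p => p.1 = γ) : Finset (ℕ × ℕ)) : Set (ℕ × ℕ)) := by
      intro p hp p' hp' h
      simp only [coe_filter, Set.mem_setOf_eq] at hp hp'
      exact Prod.ext (hp.2.trans hp'.2.symm) h
    rw [← Finset.card_image_of_injOn hinj]
    have hsub : (C.filter (fun p => p.1 = γ)).image Prod.snd ⊆ Finset.Ioc 0 (M' γ) := by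
      intro a ha
      rcases mem_image.mp ha with ⟨p, hp, rfl⟩
      exact mem_Ioc.mpr ⟨(hC p (mem_filter.mp hp).1).2.2.1, Finset.le_sup hp⟩
    calc _ ≤ _ := card_le_card hsub
    _ = M' γ := by rw [Nat.card_Ioc, Nat.sub_zero]
  -- total cardinality from fibers
  have hAcard : A.card = ∑ β ∈ Finset.Ioc 0 q, (A.filter (fun p => p.2 = β)).card :=
    Finset.card_eq_sum_card_fiberwise (fun p hp =>
      mem_Ioc.mpr ⟨(hA p hp).2.2.1, (hA p hp).2.2.2⟩)
  have hCcard : C.card = ∑ γ ∈ Finset.Ioc 0 q, (C.filter (fun p => p.1 = γ)).card :=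
    Finset.card_eq_sum_card_fiberwise (fun p hp =>
      mem_Ioc.mpr ⟨(hC p hp).1, (hC p hp).2.1⟩)
  -- the key hole-punching bound
  have hkey : ∀ β ∈ Finset.Ioc 0 q, B.card + M β * M' (q + 1 - β) ≤ q ^ 2 := by
    intro β hβ
    rw [mem_Ioc] at hβ
    set γ := q + 1 - β with hγdef
    by_cases hm : M β = 0
    · simpa [hm] using hBcard
    by_cases hm' : M' γ = 0
    · simpa [hm'] using hBcard
    have hAne : (A.filter (fun p => p.2 = β)).Nonempty := by
      rcases Finset.eq_empty_or_nonempty (A.filter (fun p => p.2 = β)) with h | h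
      · exfalso; apply hm; rw [hM]; simp [h]
      · exact h
    have hCne : (C.filter (fun p => p.1 = γ)).Nonempty := by
      rcases Finset.eq_empty_or_nonempty (C.filter (fun p => p.1 = γ)) with h | h
      · exfalso; apply hm'; rw [hM']; simp [h]
      · exact h
    obtain ⟨a, ha, hav⟩ := Finset.exists_mem_eq_sup _ hAne Prod.fst
    obtain ⟨c, hc, hcv⟩ := Finset.exists_mem_eq_sup _ hCne Prod.snd
    rw [mem_filter] at ha hc
    set m := M β
    set m' := M' γ
    have hmq : m ≤ q := hMle β
    have hm'q : m' ≤ q := hM'le γ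
    have hBsub : B ⊆ (Finset.Ioc 0 q ×ˢ Finset.Ioc 0 q) \
        (Finset.Ioc (q - m) q ×ˢ Finset.Ioc (q - m') q) := by
      intro b hb
      rcases hB b hb with ⟨h1, h2, h3, h4⟩
      rw [mem_sdiff]
      refine ⟨mem_product.mpr ⟨mem_Ioc.mpr ⟨h1, h2⟩, mem_Ioc.mpr ⟨h3, h4⟩⟩, ?_⟩
      intro hmem
      rw [mem_product, mem_Ioc, mem_Ioc] at hmem
      have ham : m = a.1 := hav
      have hcm : m' = c.2 := hcv
      have h5 : a.2 = β := ha.2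
      have h6 : c.1 = γ := hc.2
      refine htri a ha.1 b hb c hc.1 ⟨by omega, by omega, by omega⟩
    have hRsub : (Finset.Ioc (q - m) q ×ˢ Finset.Ioc (q - m') q) ⊆
        (Finset.Ioc 0 q ×ˢ Finset.Ioc 0 q) :=
      Finset.product_subset_product (Finset.Ioc_subset_Ioc (Nat.zero_le _) le_rfl)
        (Finset.Ioc_subset_Ioc (Nat.zero_le _) le_rfl)
    have hcards : B.card ≤ q ^ 2 - m * m' := by
      calc B.card ≤ _ := card_le_card hBsub
      _ = q ^ 2 - m * m' := by
        have e1 : q - (q - m) = m := by omega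
        have e2 : q - (q - m') = m' := by omega
        rw [card_sdiff_of_subset hRsub, card_product, card_product]
        simp only [Nat.card_Ioc, Nat.sub_zero, e1, e2, pow_two]
    have hmm' : m * m' ≤ q ^ 2 := by
      calc m * m' ≤ q * q := Nat.mul_le_mul hmq hm'q
      _ = q ^ 2 := by ring
    calc B.card + m * m' ≤ (q ^ 2 - m * m') + m * m' := Nat.add_le_add_right hcards _
    _ = q ^ 2 := Nat.sub_add_cancel hmm'
  -- pointwise bound
  have hpoint : ∀ β ∈ Finset.Ioc 0 q,
      q * (M β + M' (q + 1 - β)) + B.card ≤ 2 * q ^ 2 := by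
    intro β hβ
    have h1 := hkey β hβ
    have h2 := hMle β
    have h3 := hM'le (q + 1 - β)
    nlinarith [h1, h2, h3]
  -- sum it up
  have hsum : ∑ β ∈ Finset.Ioc 0 q, (q * (M β + M' (q + 1 - β)) + B.card) ≤
      q * (2 * q ^ 2) := by
    calc _ ≤ ∑ _β ∈ Finset.Ioc 0 q, 2 * q ^ 2 := Finset.sum_le_sum hpoint
    _ = q * (2 * q ^ 2) := by rw [Finset.sum_const, Nat.card_Ioc, Nat.sub_zero, smul_eq_mul]
  have hreindex : ∑ β ∈ Finset.Ioc 0 q, M' (q + 1 - β) = ∑ γ ∈ Finset.Ioc 0 q, M' γ := by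
    apply Finset.sum_nbij' (fun β => q + 1 - β) (fun γ => q + 1 - γ) <;>
      (intro a ha; simp only [mem_Ioc] at ha ⊢) <;> first | rfl | omega
  have hL : q * A.card + q * C.card + q * B.card ≤ q * (2 * q ^ 2) := by
    have e1 : A.card ≤ ∑ β ∈ Finset.Ioc 0 q, M β := by
      rw [hAcard]; exact Finset.sum_le_sum (fun β _ => hAfib β)
    have e2 : C.card ≤ ∑ β ∈ Finset.Ioc 0 q, M' (q + 1 - β) := by
      rw [hCcard]
      calc ∑ γ ∈ Finset.Ioc 0 q, (C.filter (fun p => p.1 = γ)).card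
          ≤ ∑ γ ∈ Finset.Ioc 0 q, M' γ := Finset.sum_le_sum (fun γ _ => hCfib γ)
      _ = ∑ β ∈ Finset.Ioc 0 q, M' (q + 1 - β) := hreindex.symm
    calc q * A.card + q * C.card + q * B.card
        ≤ q * (∑ β ∈ Finset.Ioc 0 q, M β) + q * (∑ β ∈ Finset.Ioc 0 q, M' (q + 1 - β))
          + q * B.card :=
          add_le_add (add_le_add (Nat.mul_le_mul (le_refl q) e1) (Nat.mul_le_mul (le_refl q) e2)) le_rfl
    _ = ∑ β ∈ Finset.Ioc 0 q, (q * (M β + M' (q + 1 - β)) + B.card) := by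
        rw [Finset.sum_add_distrib, Finset.sum_const, Nat.card_Ioc, Nat.sub_zero,
          smul_eq_mul, ← Finset.mul_sum, Finset.sum_add_distrib, Nat.mul_add]
    _ ≤ q * (2 * q ^ 2) := hsum
  have hfin : q * (A.card + B.card + C.card) ≤ q * (2 * q ^ 2) := by
    calc q * (A.card + B.card + C.card) = q * A.card + q * C.card + q * B.card := by ring
    _ ≤ q * (2 * q ^ 2) := hL
  exact Nat.le_of_mul_le_mul_left hfin hq

lemma card_edgeSet_top_fin3 : Nat.card (⊤ : SimpleGraph (Fin 3)).edgeSet = 3 := by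
  rw [Nat.card_eq_fintype_card]; decide

lemma contains_of_triangle {q : ℕ} (H : Finset (Fin 4 → ℕ)) (i j k : Fin 4)
    (hij : i ≠ j) (hik : i ≠ k) (hjk : j ≠ k)
    (x y z : Fin 4 → ℕ) (hx : x ∈ H) (hy : y ∈ H) (hz : z ∈ H)
    (hsx : qsupport x = {i, j}) (hsy : qsupport y = {i, k}) (hsz : qsupport z = {j, k})
    (h1 : q + 1 ≤ x i + y i) (h2 : q + 1 ≤ x j + z j) (h3 : q + 1 ≤ y k + z k) :
    ContainsSCopy (q + 1) (⊤ : SimpleGraph (Fin 3)) H := by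
  classical
  have hxy : x ≠ y := by
    intro h; rw [h, hsy] at hsx
    have : k ∈ ({i, j} : Finset (Fin 4)) := by rw [← hsx]; simp
    simp only [mem_insert, mem_singleton] at this
    rcases this with h' | h' <;> [exact hik h'.symm; exact hjk h'.symm]
  have hxz : x ≠ z := by
    intro h; rw [h, hsz] at hsx
    have : k ∈ ({i, j} : Finset (Fin 4)) := by rw [← hsx]; simp
    simp only [mem_insert, mem_singleton] at this
    rcases this with h' | h' <;> [exact hik h'.symm; exact hjk h'.symm]
  have hyz : y ≠ z := by
    intro h; rw [h, hsz] at hsy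
    have : j ∈ ({i, k} : Finset (Fin 4)) := by rw [← hsy]; simp
    simp only [mem_insert, mem_singleton] at this
    rcases this with h' | h' <;> [exact hij h'.symm; exact hjk h']
  refine ⟨{x, y, z}, ?_, ![i, j, k], ?_, ?_, ?_, ?_⟩
  · intro w hw
    simp only [mem_insert, mem_singleton] at hw
    rcases hw with rfl | rfl | rfl <;> assumption
  · intro u v huv
    fin_cases u <;> fin_cases v <;> simp_all
  · intro u v
    simp only [SimpleGraph.top_adj]
    constructor
    · intro huv
      fin_cases u <;> fin_cases v <;> simp_all
      · exact Or.inl (Finset.pair_comm i j)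
      · exact Or.inr (Or.inl (Finset.pair_comm i k))
      · exact Or.inr (Or.inr (Finset.pair_comm j k))
    · rintro ⟨w, hw, hsupp⟩ rfl
      have hcard2 : (qsupport w).card = 2 := by
        simp only [mem_insert, mem_singleton] at hw
        rcases hw with rfl | rfl | rfl
        · rw [hsx]; exact card_pair hij
        · rw [hsy]; exact card_pair hik
        · rw [hsz]; exact card_pair hjk
      rw [hsupp] at hcard2
      simp at hcard2
  · rw [card_edgeSet_top_fin3]
    rw [card_insert_of_notMem (by simp [hxy, hxz]), card_insert_of_notMem (by simp [hyz]),
      card_singleton]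
  · intro w1 hw1 w2 hw2 hne l hl1 hl2
    have keyl : ∀ w w' : Fin 4 → ℕ, ∀ p1 p2 p3 p4 : Fin 4, qsupport w = {p1, p2} →
        qsupport w' = {p3, p4} → w l ≠ 0 → w' l ≠ 0 →
        (l = p1 ∨ l = p2) ∧ (l = p3 ∨ l = p4) := by
      intro w w' p1 p2 p3 p4 hw hw' h h'
      constructor
      · have : l ∈ qsupport w := mem_qsupport.mpr h
        rw [hw] at this; simpa using this
      · have : l ∈ qsupport w' := mem_qsupport.mpr h'
        rw [hw'] at this; simpa using this
    simp only [mem_insert, mem_singleton] at hw1 hw2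
    rcases hw1 with rfl | rfl | rfl <;> rcases hw2 with rfl | rfl | rfl
    · exact absurd rfl hne
    · obtain ⟨ha, hb⟩ := keyl w1 w2 i j i k hsx hsy hl1 hl2
      have hl : l = i := by rcases ha with rfl | rfl <;> rcases hb with h | h <;> simp_all
      rw [hl]; omega
    · obtain ⟨ha, hb⟩ := keyl w1 w2 i j j k hsx hsz hl1 hl2
      have hl : l = j := by rcases ha with rfl | rfl <;> rcases hb with h | h <;> simp_all
      rw [hl]; omega
    · obtain ⟨ha, hb⟩ := keyl w1 w2 i k i j hsy hsx hl1 hl2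
      have hl : l = i := by rcases ha with rfl | rfl <;> rcases hb with h | h <;> simp_all
      rw [hl]; omega
    · exact absurd rfl hne
    · obtain ⟨ha, hb⟩ := keyl w1 w2 i k j k hsy hsz hl1 hl2
      have hl : l = k := by rcases ha with rfl | rfl <;> rcases hb with h | h <;> simp_all
      rw [hl]; omega
    · obtain ⟨ha, hb⟩ := keyl w1 w2 j k i j hsz hsx hl1 hl2
      have hl : l = j := by rcases ha with rfl | rfl <;> rcases hb with h | h <;> simp_all
      rw [hl]; omega
    · obtain ⟨ha, hb⟩ := keyl w1 w2 j k i k hsz hsy hl1 hl2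
      have hl : l = k := by rcases ha with rfl | rfl <;> rcases hb with h | h <;> simp_all
      rw [hl]; omega
    · exact absurd rfl hne

lemma triple_bound {q : ℕ} (hq : 0 < q) (H : Finset (Fin 4 → ℕ)) (hH : H ⊆ Qset q 4)
    (hfree : ¬ ContainsSCopy (q + 1) (⊤ : SimpleGraph (Fin 3)) H)
    (i j k : Fin 4) (hij : i ≠ j) (hik : i ≠ k) (hjk : j ≠ k) :
    (H.filter (fun x => qsupport x = {i, j})).card +
    (H.filter (fun x => qsupport x = {i, k})).card +
    (H.filter (fun x => qsupport x = {j, k})).card ≤ 2 * q ^ 2 := by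
  classical
  set A := (H.filter (fun x => qsupport x = ({i, j} : Finset (Fin 4)))).image
    (fun x => (x i, x j)) with hAdef
  set B := (H.filter (fun x => qsupport x = ({i, k} : Finset (Fin 4)))).image
    (fun x => (x i, x k)) with hBdef
  set C := (H.filter (fun x => qsupport x = ({j, k} : Finset (Fin 4)))).image
    (fun x => (x j, x k)) with hCdef
  have hbound : ∀ (x : Fin 4 → ℕ), x ∈ H → ∀ l : Fin 4, l ∈ qsupport x →
      0 < x l ∧ x l ≤ q := by
    intro x hx l hl
    have := (mem_Qset_iff x).mp (hH hx)
    exact ⟨Nat.pos_of_ne_zero (mem_qsupport.mp hl), this.1 l⟩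
  have hA : ∀ p ∈ A, 0 < p.1 ∧ p.1 ≤ q ∧ 0 < p.2 ∧ p.2 ≤ q := by
    intro p hp
    rcases mem_image.mp hp with ⟨x, hx, rfl⟩
    rw [mem_filter] at hx
    have h1 := hbound x hx.1 i (by rw [hx.2]; simp)
    have h2 := hbound x hx.1 j (by rw [hx.2]; simp)
    exact ⟨h1.1, h1.2, h2.1, h2.2⟩
  have hB : ∀ p ∈ B, 0 < p.1 ∧ p.1 ≤ q ∧ 0 < p.2 ∧ p.2 ≤ q := by
    intro p hp
    rcases mem_image.mp hp with ⟨x, hx, rfl⟩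
    rw [mem_filter] at hx
    have h1 := hbound x hx.1 i (by rw [hx.2]; simp)
    have h2 := hbound x hx.1 k (by rw [hx.2]; simp)
    exact ⟨h1.1, h1.2, h2.1, h2.2⟩
  have hC : ∀ p ∈ C, 0 < p.1 ∧ p.1 ≤ q ∧ 0 < p.2 ∧ p.2 ≤ q := by
    intro p hp
    rcases mem_image.mp hp with ⟨x, hx, rfl⟩
    rw [mem_filter] at hx
    have h1 := hbound x hx.1 j (by rw [hx.2]; simp)
    have h2 := hbound x hx.1 k (by rw [hx.2]; simp)
    exact ⟨h1.1, h1.2, h2.1, h2.2⟩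
  have htri : ∀ a ∈ A, ∀ b ∈ B, ∀ c ∈ C,
      ¬(q + 1 ≤ a.1 + b.1 ∧ q + 1 ≤ a.2 + c.1 ∧ q + 1 ≤ b.2 + c.2) := by
    rintro a ha b hb c hc ⟨s1, s2, s3⟩
    rcases mem_image.mp ha with ⟨x, hx, rfl⟩
    rcases mem_image.mp hb with ⟨y, hy, rfl⟩
    rcases mem_image.mp hc with ⟨z, hz, rfl⟩
    rw [mem_filter] at hx hy hz
    exact hfree (contains_of_triangle H i j k hij hik hjk x y z hx.1 hy.1 hz.1
      hx.2 hy.2 hz.2 s1 s2 s3)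
  have hmain := key_lemma q hq A B C hA hB hC htri
  have hcA : A.card = (H.filter (fun x => qsupport x = ({i, j} : Finset (Fin 4)))).card := by
    apply Finset.card_image_of_injOn
    intro x hx y hy hxy
    simp only [coe_filter, Set.mem_setOf_eq] at hx hy
    simp only [Prod.mk.injEq] at hxy
    rw [eq_qedge_of_qsupport hx.2, eq_qedge_of_qsupport hy.2, hxy.1, hxy.2]
  have hcB : B.card = (H.filter (fun x => qsupport x = ({i, k} : Finset (Fin 4)))).card := by
    apply Finset.card_image_of_injOn
    intro x hx y hy hxy
    simp only [coe_filter, Set.mem_setOf_eq] at hx hy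
    simp only [Prod.mk.injEq] at hxy
    rw [eq_qedge_of_qsupport hx.2, eq_qedge_of_qsupport hy.2, hxy.1, hxy.2]
  have hcC : C.card = (H.filter (fun x => qsupport x = ({j, k} : Finset (Fin 4)))).card := by
    apply Finset.card_image_of_injOn
    intro x hx y hy hxy
    simp only [coe_filter, Set.mem_setOf_eq] at hx hy
    simp only [Prod.mk.injEq] at hxy
    rw [eq_qedge_of_qsupport hx.2, eq_qedge_of_qsupport hy.2, hxy.1, hxy.2]
  rw [← hcA, ← hcB, ← hcC]
  exact hmain

lemma upper_bound {q : ℕ} (hq : 0 < q) (H : Finset (Fin 4 → ℕ)) (hH : H ⊆ Qset q 4)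
    (hfree : ¬ ContainsSCopy (q + 1) (⊤ : SimpleGraph (Fin 3)) H) :
    H.card ≤ 4 * q ^ 2 := by
  classical
  have hclass : ∀ s : Finset (Fin 4), s.card = 2 →
      s ∈ ({{0,1},{0,2},{0,3},{1,2},{1,3},{2,3}} : Finset (Finset (Fin 4))) := by decide
  have hmem : ∀ x ∈ H, qsupport x ∈
      ({{0,1},{0,2},{0,3},{1,2},{1,3},{2,3}} : Finset (Finset (Fin 4))) :=
    fun x hx => hclass _ ((mem_Qset_iff x).mp (hH hx)).2
  have hsplit := Finset.card_eq_sum_card_fiberwise hmem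
  rw [show ({{0,1},{0,2},{0,3},{1,2},{1,3},{2,3}} : Finset (Finset (Fin 4))) =
      insert {0,1} (insert {0,2} (insert {0,3} (insert {1,2} (insert {1,3}
        ({{2,3}} : Finset (Finset (Fin 4)))))))  from rfl,
    Finset.sum_insert (by decide), Finset.sum_insert (by decide),
    Finset.sum_insert (by decide), Finset.sum_insert (by decide),
    Finset.sum_insert (by decide), Finset.sum_singleton] at hsplit
  have t1 := triple_bound hq H hH hfree 0 1 2 (by decide) (by decide) (by decide)
  have t2 := triple_bound hq H hH hfree 0 1 3 (by decide) (by decide) (by decide)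
  have t3 := triple_bound hq H hH hfree 0 2 3 (by decide) (by decide) (by decide)
  have t4 := triple_bound hq H hH hfree 1 2 3 (by decide) (by decide) (by decide)
  rw [hsplit]
  linarith

lemma lower_bound (q : ℕ) (hq : 0 < q) :
    ∃ H ⊆ Qset q 4, ¬ ContainsSCopy (q + 1) (⊤ : SimpleGraph (Fin 3)) H ∧
      H.card = 4 * q ^ 2 := by
  classical
  set E : Fin 4 → Fin 4 → Finset (Fin 4 → ℕ) := fun i j =>
    (Finset.Ioc 0 q ×ˢ Finset.Ioc 0 q).image (fun p => qedge i j p.1 p.2) with hEdef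
  have hE : ∀ i j : Fin 4, i ≠ j → ∀ x ∈ E i j,
      qsupport x = {i, j} ∧ x ∈ Qset q 4 := by
    intro i j hij x hx
    rcases mem_image.mp hx with ⟨p, hp, rfl⟩
    rw [mem_product, mem_Ioc, mem_Ioc] at hp
    have hs : qsupport (qedge i j p.1 p.2) = {i, j} :=
      qsupport_qedge hij (by omega) (by omega)
    refine ⟨hs, (mem_Qset_iff _).mpr ⟨?_, by rw [hs]; exact card_pair hij⟩⟩
    intro l
    unfold qedge
    split_ifs with h1 h2
    · exact hp.1.2
    · exact hp.2.2
    · exact Nat.zero_le q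
  have hEcard : ∀ i j : Fin 4, i ≠ j → (E i j).card = q ^ 2 := by
    intro i j hij
    rw [hEdef]
    rw [Finset.card_image_of_injOn]
    · rw [card_product, Nat.card_Ioc, Nat.sub_zero, pow_two]
    · intro p hp p' hp' h
      have e1 : p.1 = p'.1 := by
        simpa [qedge_apply_fst] using congrFun h i
      have e2 : p.2 = p'.2 := by
        simpa [qedge_apply_snd hij] using congrFun h j
      exact Prod.ext e1 e2
  set H₀ : Finset (Fin 4 → ℕ) := E 0 2 ∪ E 0 3 ∪ E 1 2 ∪ E 1 3 with hH₀def
  have hsupp : ∀ x ∈ H₀, qsupport x = {0, 2} ∨ qsupport x = {0, 3} ∨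
      qsupport x = {1, 2} ∨ qsupport x = {1, 3} := by
    intro x hx
    rw [hH₀def, mem_union, mem_union, mem_union] at hx
    rcases hx with ((h | h) | h) | h
    · exact Or.inl (hE 0 2 (by decide) x h).1
    · exact Or.inr (Or.inl (hE 0 3 (by decide) x h).1)
    · exact Or.inr (Or.inr (Or.inl (hE 1 2 (by decide) x h).1))
    · exact Or.inr (Or.inr (Or.inr (hE 1 3 (by decide) x h).1))
  have hdisj : ∀ i j k l : Fin 4, i ≠ j → k ≠ l →
      ({i, j} : Finset (Fin 4)) ≠ {k, l} → Disjoint (E i j) (E k l) := by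
    intro i j k l hij hkl hne
    rw [Finset.disjoint_left]
    intro x h1 h2
    exact hne (((hE i j hij x h1).1).symm.trans ((hE k l hkl x h2).1))
  have hsub : H₀ ⊆ Qset q 4 := by
    intro x hx
    rw [hH₀def, mem_union, mem_union, mem_union] at hx
    rcases hx with ((h | h) | h) | h
    · exact (hE 0 2 (by decide) x h).2
    · exact (hE 0 3 (by decide) x h).2
    · exact (hE 1 2 (by decide) x h).2
    · exact (hE 1 3 (by decide) x h).2
  have hcard : H₀.card = 4 * q ^ 2 := by
    have d1 : Disjoint (E 0 2) (E 0 3) := hdisj _ _ _ _ (by decide) (by decide) (by decide)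
    have d2 : Disjoint (E 0 2 ∪ E 0 3) (E 1 2) := by
      rw [Finset.disjoint_union_left]
      exact ⟨hdisj _ _ _ _ (by decide) (by decide) (by decide),
        hdisj _ _ _ _ (by decide) (by decide) (by decide)⟩
    have d3 : Disjoint (E 0 2 ∪ E 0 3 ∪ E 1 2) (E 1 3) := by
      rw [Finset.disjoint_union_left, Finset.disjoint_union_left]
      exact ⟨⟨hdisj _ _ _ _ (by decide) (by decide) (by decide),
        hdisj _ _ _ _ (by decide) (by decide) (by decide)⟩,
        hdisj _ _ _ _ (by decide) (by decide) (by decide)⟩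
    rw [hH₀def, Finset.card_union_of_disjoint d3, Finset.card_union_of_disjoint d2,
      Finset.card_union_of_disjoint d1, hEcard 0 2 (by decide), hEcard 0 3 (by decide),
      hEcard 1 2 (by decide), hEcard 1 3 (by decide)]
    ring
  have hfree : ¬ ContainsSCopy (q + 1) (⊤ : SimpleGraph (Fin 3)) H₀ := by
    rintro ⟨H', hH'sub, ι, hinj, hadj, hcard', hsum⟩
    have h01 : (⊤ : SimpleGraph (Fin 3)).Adj 0 1 := by simp
    have h02 : (⊤ : SimpleGraph (Fin 3)).Adj 0 2 := by simp
    have h12 : (⊤ : SimpleGraph (Fin 3)).Adj 1 2 := by simp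
    obtain ⟨x, hx, hxs⟩ := (hadj 0 1).mp h01
    obtain ⟨y, hy, hys⟩ := (hadj 0 2).mp h02
    obtain ⟨z, hz, hzs⟩ := (hadj 1 2).mp h12
    have hxS := hsupp x (hH'sub hx); rw [hxs] at hxS
    have hyS := hsupp y (hH'sub hy); rw [hys] at hyS
    have hzS := hsupp z (hH'sub hz); rw [hzs] at hzS
    have hdec : ∀ a b c : Fin 4, a ≠ b → a ≠ c → b ≠ c →
        ¬((({a,b} : Finset (Fin 4)) = {0,2} ∨ ({a,b}:Finset (Fin 4)) = {0,3} ∨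
            ({a,b}:Finset (Fin 4)) = {1,2} ∨ ({a,b}:Finset (Fin 4)) = {1,3}) ∧
          (({a,c} : Finset (Fin 4)) = {0,2} ∨ ({a,c}:Finset (Fin 4)) = {0,3} ∨
            ({a,c}:Finset (Fin 4)) = {1,2} ∨ ({a,c}:Finset (Fin 4)) = {1,3}) ∧
          (({b,c} : Finset (Fin 4)) = {0,2} ∨ ({b,c}:Finset (Fin 4)) = {0,3} ∨
            ({b,c}:Finset (Fin 4)) = {1,2} ∨ ({b,c}:Finset (Fin 4)) = {1,3})) := by decide
    exact hdec (ι 0) (ι 1) (ι 2)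
      (fun h => absurd (hinj h) (by decide))
      (fun h => absurd (hinj h) (by decide))
      (fun h => absurd (hinj h) (by decide))
      ⟨hxS, hyS, hzS⟩
  exact ⟨H₀, hsub, hfree, hcard⟩

/-- `ex(4, K₃, q) = 4q²` for every `q ≥ 2`. -/
theorem exQ_triangle_n4 (q : ℕ) (hq : 2 ≤ q) :
    exQ 4 (⊤ : SimpleGraph (Fin 3)) q (q + 1) = 4 * q ^ 2 := by
  have hq0 : 0 < q := by omega
  obtain ⟨H₀, hH₀sub, hH₀free, hH₀card⟩ := lower_bound q hq0
  unfold exQ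
  have hmem : 4 * q ^ 2 ∈ {m | ∃ H ⊆ Qset q 4,
      ¬ ContainsSCopy (q + 1) (⊤ : SimpleGraph (Fin 3)) H ∧ m = H.card} :=
    ⟨H₀, hH₀sub, hH₀free, hH₀card.symm⟩
  apply le_antisymm
  · apply csSup_le ⟨4 * q ^ 2, hmem⟩
    rintro m ⟨H, hHsub, hHfree, rfl⟩
    exact upper_bound hq0 H hHsub hHfree
  · apply le_csSup _ hmem
    refine ⟨(Qset q 4).card, ?_⟩
    rintro m ⟨H, hHsub, -, rfl⟩
    exact card_le_card hHsub
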